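/- arXiv:1010.1948 — 5 statements merged into one kernel-verified Lean document; each statement's English description precedes it below -/
import Mathlib

section
/- Let b, h, m be positive integers with m ≥ b, let x_L < x_R be reals, and let ℓ_L, ℓ_R, A, C be reals. Suppose a_0 < a_1 < ⋯ < a_{m−1} and c_0 < c_1 < ⋯ < c_{m−1} are the endpoint heights of m sorted pairwise disjoint segments across the slab [x_L, x_R], with a_i ∈ [A, A + 2^{ℓ_L}] and c_i ∈ [C, C + 2^{ℓ_R}] for all i. Then there exist an integer k with 0 ≤ k ≤ 2b and indices 0 = i_0 < i_1 < ⋯ < i_k ≤ m − 1 such that: (0) m − 1 − i_k ≤ m/b; (1) for every j < k at least one of the following holds: (1a) i_{j+1} − i_j ≤ m/b, (1b) a_{i_{j+1}} − a_{i_j} ≤ 2^{ℓ_L − h}, (1c) c_{i_{j+1}} − c_{i_j} ≤ 2^{ℓ_R − h}; and (2) there exist reals ã_j and c̃_j, for each even j with 0 ≤ j ≤ k, such that (2a) a_{i_j} < ã_j and c_{i_j} < c̃_j, and whenever j + 2 ≤ k also ã_j ≤ a_{i_{j+2}} and c̃_j ≤ c_{i_{j+2}}; (2b) for all even j, j′ ≤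 k, the difference ã_j − ã_{j′} is an integer multiple of 2^{ℓ_L − h}; (2c) for all even j, j′ ≤ k, the difference c̃_j − c̃_{j′} is an integer multiple of 2^{ℓ_R − h}. -/
/-- The least grid point (on the grid `δ·ℤ`) strictly above `x`. -/
noncomputable def gridUp (δ x : ℝ) : ℝ := δ * (⌊x / δ⌋ + 1)

lemma gridUp_gt {δ : ℝ} (hδ : 0 < δ) (x : ℝ) : x < gridUp δ x := by
  have h1 : x / δ < (⌊x / δ⌋ : ℝ) + 1 := Int.lt_floor_add_one _
  have h2 : x = δ * (x / δ) := by field_simp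
  unfold gridUp; nlinarith

lemma gridUp_le {δ : ℝ} (hδ : 0 < δ) (x : ℝ) : gridUp δ x ≤ x + δ := by
  have h1 : ((⌊x / δ⌋ : ℝ)) ≤ x / δ := Int.floor_le _
  have h2 : x = δ * (x / δ) := by field_simp
  unfold gridUp; nlinarith

lemma gridUp_sub (δ x y : ℝ) : ∃ z : ℤ, gridUp δ x - gridUp δ y = (z : ℝ) * δ :=
  ⟨⌊x / δ⌋ - ⌊y / δ⌋, by unfold gridUp; push_cast; ring⟩

open Classical in
/-- Candidate next indices from `i`. -/
noncomputable def stepSet (m d : ℕ) (a c : ℕ → ℝ) (δa δc : ℝ) (i : ℕ) : Finset ℕ :=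
  (Finset.Icc (i + 1) (m - 1)).filter (fun i' =>
    a i' < gridUp δa (a i) ∨ c i' < gridUp δc (c i) ∨ i' ≤ i + d)

noncomputable def stepF (m d : ℕ) (a c : ℕ → ℝ) (δa δc : ℝ) : ℕ → ℕ
  | 0 => 0
  | j + 1 =>
    if Even j then
      if hS : (stepSet m d a c δa δc (stepF m d a c δa δc j)).Nonempty
      then (stepSet m d a c δa δc (stepF m d a c δa δc j)).max' hS
      else stepF m d a c δa δc j + 1
    else stepF m d a c δa δc j + 1

lemma stepSet_mem (m d : ℕ) (a c : ℕ → ℝ) (δa δc : ℝ) (i i' : ℕ) :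
    i' ∈ stepSet m d a c δa δc i ↔
      (i + 1 ≤ i' ∧ i' ≤ m - 1 ∧
        (a i' < gridUp δa (a i) ∨ c i' < gridUp δc (c i) ∨ i' ≤ i + d)) := by
  classical
  simp [stepSet, Finset.mem_filter, Finset.mem_Icc, and_assoc]

lemma stepF_zero (m d : ℕ) (a c : ℕ → ℝ) (δa δc : ℝ) : stepF m d a c δa δc 0 = 0 := rfl

lemma stepF_even (m d : ℕ) (a c : ℕ → ℝ) (δa δc : ℝ) {j : ℕ} (hj : Even j)
    (hS : (stepSet m d a c δa δc (stepF m d a c δa δc j)).Nonempty) :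
    stepF m d a c δa δc (j + 1) = (stepSet m d a c δa δc (stepF m d a c δa δc j)).max' hS := by
  rw [stepF, if_pos hj, dif_pos hS]

lemma stepF_even_empty (m d : ℕ) (a c : ℕ → ℝ) (δa δc : ℝ) {j : ℕ} (hj : Even j)
    (hS : ¬ (stepSet m d a c δa δc (stepF m d a c δa δc j)).Nonempty) :
    stepF m d a c δa δc (j + 1) = stepF m d a c δa δc j + 1 := by
  rw [stepF, if_pos hj, dif_neg hS]

lemma stepF_odd (m d : ℕ) (a c : ℕ → ℝ) (δa δc : ℝ) {j : ℕ} (hj : ¬ Even j) :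
    stepF m d a c δa δc (j + 1) = stepF m d a c δa δc j + 1 := by
  rw [stepF, if_neg hj]



/-- Existence content of Observation 2.1: given `m ≥ b` sorted disjoint segments
across the slab `[x_L, x_R]` with left endpoint heights `a_i` in an interval of
length `2^{ℓ_L}` and right endpoint heights `c_i` in an interval of length
`2^{ℓ_R}`, there are at most `2b + 1` selected segments `s_{i_0} ≺ s_{i_1} ≺ ⋯`,
starting with the lowest one, such that consecutive selected segments either have
at most `m/b` segments between them, or nearby left endpoints, or nearby right
endpoints; moreover, rounded segments `s̃_j` (given by heights `ã_j, c̃_j`) exist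
for even `j`, interleaving the selected segments with endpoints on grids of
spacings `2^{ℓ_L - h}` and `2^{ℓ_R - h}`. -/
theorem observation_basic
    (b h m : ℕ) (hb : 0 < b) (hh : 0 < h) (hm : b ≤ m)
    (xL xR : ℝ) (hx : xL < xR) (ℓL ℓR A C : ℝ)
    (a c : ℕ → ℝ)
    (ha_mono : ∀ i j, i < j → j < m → a i < a j)
    (hc_mono : ∀ i j, i < j → j < m → c i < c j)
    (ha_rng : ∀ i, i < m → a i ∈ Set.Icc A (A + (2:ℝ) ^ ℓL))
    (hc_rng : ∀ i, i < m → c i ∈ Set.Icc C (C + (2:ℝ) ^ ℓR)) :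
    ∃ (k : ℕ) (idx : ℕ → ℕ),
      k ≤ 2 * b ∧
      idx 0 = 0 ∧
      (∀ j, j < k → idx j < idx (j + 1)) ∧
      idx k ≤ m - 1 ∧
      ((m : ℝ) - 1 - (idx k : ℝ) ≤ (m : ℝ) / (b : ℝ)) ∧
      (∀ j, j < k →
        ((idx (j + 1) : ℝ) - (idx j : ℝ) ≤ (m : ℝ) / (b : ℝ)) ∨
        (a (idx (j + 1)) - a (idx j) ≤ (2:ℝ) ^ (ℓL - (h : ℝ))) ∨
        (c (idx (j + 1)) - c (idx j) ≤ (2:ℝ) ^ (ℓR - (h : ℝ)))) ∧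
      ∃ ta tc : ℕ → ℝ,
        (∀ j, j ≤ k → Even j →
          a (idx j) < ta j ∧ c (idx j) < tc j ∧
          (j + 2 ≤ k → ta j ≤ a (idx (j + 2)) ∧ tc j ≤ c (idx (j + 2)))) ∧
        (∀ j j', j ≤ k → j' ≤ k → Even j → Even j' →
          ∃ z : ℤ, ta j - ta j' = (z : ℝ) * (2:ℝ) ^ (ℓL - (h : ℝ))) ∧
        (∀ j j', j ≤ k → j' ≤ k → Even j → Even j' →
          ∃ z : ℤ, tc j - tc j' = (z : ℝ) * (2:ℝ) ^ (ℓR - (h : ℝ))) := by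
  classical
  set δa := (2:ℝ) ^ (ℓL - (h:ℝ)) with hδa_def
  set δc := (2:ℝ) ^ (ℓR - (h:ℝ)) with hδc_def
  have hδa : 0 < δa := by positivity
  have hδc : 0 < δc := by positivity
  set d := m / b with hd_def
  set f := stepF m d a c δa δc with hf_def
  have hm1 : 1 ≤ m := hb.trans_le hm
  have hd1 : 1 ≤ d := (Nat.one_le_div_iff hb).mpr hm
  have hmd : m < b * d + b := by
    have h1 := Nat.div_add_mod m b
    have h2 := Nat.mod_lt m hb
    rw [← hd_def] at h1
    omega
  have hf0 : f 0 = 0 := rfl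
  -- every step increases f by at least 1
  have hstep : ∀ j, f j + 1 ≤ f (j + 1) := by
    intro j
    by_cases hj : Even j
    · by_cases hS : (stepSet m d a c δa δc (f j)).Nonempty
      · rw [hf_def, stepF_even m d a c δa δc hj hS]
        have hmem := (stepSet m d a c δa δc (f j)).max'_mem hS
        rw [stepSet_mem] at hmem
        exact hmem.1
      · rw [hf_def, stepF_even_empty m d a c δa δc hj hS]
    · rw [hf_def, stepF_odd m d a c δa δc hj]
  have hfj : ∀ j, j ≤ f j := by
    intro j
    induction j with
    | zero => omega
    | succ n ih => have := hstep n; omega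
  have hPex : ∃ j, m - 1 ≤ f j + d := ⟨m, by have := hfj m; omega⟩
  set k := Nat.find hPex with hk_def
  have hPk : m - 1 ≤ f k + d := Nat.find_spec hPex
  have hPlt : ∀ j, j < k → ¬ (m - 1 ≤ f j + d) := fun j hj => Nat.find_min hPex hj
  -- core facts about even steps before k
  have hcore : ∀ j, j < k → Even j →
      ∃ hS : (stepSet m d a c δa δc (f j)).Nonempty,
        f (j + 1) = (stepSet m d a c δa δc (f j)).max' hS ∧
        f j + d ≤ f (j + 1) ∧ f (j + 1) ∈ stepSet m d a c δa δc (f j) := by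
    intro j hj hje
    have hnp := hPlt j hj
    have hmem : f j + d ∈ stepSet m d a c δa δc (f j) := by
      rw [stepSet_mem]
      exact ⟨by omega, by omega, Or.inr (Or.inr le_rfl)⟩
    have hS : (stepSet m d a c δa δc (f j)).Nonempty := ⟨_, hmem⟩
    have heq : f (j + 1) = (stepSet m d a c δa δc (f j)).max' hS :=
      stepF_even m d a c δa δc hje hS
    refine ⟨hS, heq, ?_, ?_⟩
    · rw [heq]; exact Finset.le_max' _ _ hmem
    · rw [heq]; exact (stepSet m d a c δa δc (f j)).max'_mem hS
  have hbound : ∀ j, j ≤ k → f j ≤ m - 1 := by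
    intro j hj
    induction j with
    | zero => rw [hf0]; omega
    | succ n ih =>
      have hn : n < k := hj
      have hnp := hPlt n hn
      by_cases hne : Even n
      · obtain ⟨hS, heq, hge, hmem⟩ := hcore n hn hne
        rw [stepSet_mem] at hmem
        omega
      · rw [hf_def, stepF_odd m d a c δa δc hne]
        rw [← hf_def]
        omega
  have hdb : (d : ℝ) ≤ (m : ℝ) / (b : ℝ) := by
    rw [le_div_iff₀ (by exact_mod_cast hb)]
    exact_mod_cast Nat.div_mul_le_self m b
  refine ⟨k, f, ?_, hf0, ?_, hbound k le_rfl, ?_, ?_, ?_⟩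
  · -- k ≤ 2 * b
    by_contra hk
    push_neg at hk
    have hpair : ∀ t, 2 * t ≤ k → t * (d + 1) ≤ f (2 * t) := by
      intro t
      induction t with
      | zero => simp
      | succ s ih =>
        intro hle
        have h2s : 2 * s < k := by omega
        have heven : Even (2 * s) := even_two_mul s
        obtain ⟨hS, heq, hge, hmem⟩ := hcore _ h2s heven
        have hodd : ¬ Even (2 * s + 1) := by
          simp [Nat.even_add_one, heven]
        have h2 : f (2 * s + 1 + 1) = f (2 * s + 1) + 1 := by
          rw [hf_def, stepF_odd m d a c δa δc hodd]
        have hih := ih (by omega)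
        have h3 : 2 * (s + 1) = 2 * s + 1 + 1 := by ring
        have h4 : (s + 1) * (d + 1) = s * (d + 1) + (d + 1) := by ring
        rw [h3, h2, h4]
        omega
    have h5 := hpair b (by omega)
    have h6 := hPlt (2 * b) (by omega)
    have h7 : b * (d + 1) = b * d + b := by ring
    rw [h7] at h5
    obtain ⟨hS, heq, hge, hmem⟩ := hcore (2 * b) (by omega) (even_two_mul b)
    omega
  · intro j hj
    have := hstep j
    omega
  · -- real bound
    have h1 : ((m - 1 : ℕ) : ℝ) ≤ ((f k + d : ℕ) : ℝ) := Nat.cast_le.mpr hPk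
    rw [Nat.cast_sub hm1] at h1
    push_cast at h1
    linarith
  · -- step condition
    intro j hj
    by_cases hje : Even j
    · obtain ⟨hS, heq, hge, hmem⟩ := hcore j hj hje
      rw [stepSet_mem] at hmem
      rcases hmem.2.2 with hca | hcc | hci
      · right; left
        have := gridUp_le hδa (a (f j))
        linarith
      · right; right
        have := gridUp_le hδc (c (f j))
        linarith
      · left
        have : ((f (j + 1) : ℕ) : ℝ) ≤ (f j : ℝ) + (d : ℝ) := by exact_mod_cast hci
        linarith
    · left
      rw [hf_def, stepF_odd m d a c δa δc hje, ← hf_def]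
      have h1 : (1 : ℝ) ≤ (m : ℝ) / (b : ℝ) := by
        rw [le_div_iff₀ (by exact_mod_cast hb)]
        exact_mod_cast by omega
      push_cast
      linarith
  · -- rounded segments
    refine ⟨fun j => gridUp δa (a (f j)), fun j => gridUp δc (c (f j)), ?_, ?_, ?_⟩
    · intro j hjk hje
      refine ⟨gridUp_gt hδa _, gridUp_gt hδc _, ?_⟩
      intro hj2
      have hjlt : j < k := by omega
      obtain ⟨hS, heq, hge, hmem⟩ := hcore j hjlt hje
      have hodd : ¬ Even (j + 1) := by simp [Nat.even_add_one, hje]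
      have hf2 : f (j + 2) = f (j + 1) + 1 := by
        rw [hf_def]
        exact stepF_odd m d a c δa δc hodd
      have hle2 : f (j + 2) ≤ m - 1 := hbound _ hj2
      have hnot : f (j + 2) ∉ stepSet m d a c δa δc (f j) := by
        intro hmem2
        have h := Finset.le_max' _ _ hmem2
        rw [← heq] at h
        omega
      have hcond1 : f j + 1 ≤ f (j + 2) := by
        have := hstep j; have := hstep (j + 1); omega
      have hnotor : ¬ (a (f (j + 2)) < gridUp δa (a (f j)) ∨
          c (f (j + 2)) < gridUp δc (c (f j)) ∨ f (j + 2) ≤ f j + d) := by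
        intro hor
        exact hnot ((stepSet_mem m d a c δa δc (f j) (f (j + 2))).mpr ⟨hcond1, hle2, hor⟩)
      push_neg at hnotor
      exact ⟨hnotor.1, hnotor.2.1⟩
    · intro j j' _ _ _ _
      exact gridUp_sub δa _ _
    · intro j j' _ _ _ _
      exact gridUp_sub δc _ _
end

section
/- Let b, h, m be positive integers with m ≥ b and h ≥ 1, let Δ > 0 and ℓ, A, C be reals. Suppose a_0 < a_1 < ⋯ < a_{m−1} and c_0 < c_1 < ⋯ < c_{m−1} are the endpoint heights of m sorted pairwise disjoint segments across the slab [0, Δ], with a_i ∈ [A, A + 2^{ℓ}] and c_i ∈ [C, C + 2^{ℓ}] for all i. Then there exist an integer k with 0 ≤ k ≤ 2b and indices 0 = i_0 < i_1 < ⋯ < i_k ≤ m − 1 such that: (0) m − 1 − i_k ≤ m/b; (1) for every j < k, either (1a) i_{j+1} − i_j ≤ m/b, or (1b) both a_{i_{j+1}} − a_{i_j} ≤ 2^{ℓ−h} and c_{i_{j+1}} − c_{i_j} ≤ 2^{ℓ−h}; and (2) there exist reals ã_j and c̃_j for each 0 ≤ j ≤ k such that (2a) for all j, j′ ≤ k the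 differences ã_j − ã_{j′} and c̃_j − c̃_{j′} are integer multiples of 2^{ℓ−2h}; (2b) for every j ≤ k, a_{i_j} < ã_j ≤ a_{i_j} + 2^{ℓ−2h} and c_{i_j} < c̃_j ≤ c_{i_j} + 2^{ℓ−2h}; and (2c) whenever j + 2 ≤ k, for every x in the center slab [Δ·2^{−h}, Δ·(1 − 2^{−h})], f_{ã_j, c̃_j}(x) < f_{a_{i_{j+2}}, c_{i_{j+2}}}(x). -/
noncomputable section ObsAux

def obsP (a c : ℕ → ℝ) (δ : ℝ) (i n : ℕ) : Prop :=
  a n ≤ a i + δ ∧ c n ≤ c i + δ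

def obsMC (a c : ℕ → ℝ) (δ : ℝ) (m i : ℕ) : ℕ :=
  letI := Classical.decPred (obsP a c δ i)
  Nat.findGreatest (obsP a c δ i) (m - 1)

def obsIdx (a c : ℕ → ℝ) (δ : ℝ) (m Q : ℕ) : ℕ → ℕ
  | 0 => 0
  | j + 1 => min (m - 1) (max (obsIdx a c δ m Q j + Q) (obsMC a c δ m (obsIdx a c δ m Q j)))

theorem obsMC_le (a c : ℕ → ℝ) (δ : ℝ) (m i : ℕ) : obsMC a c δ m i ≤ m - 1 := by
  letI := Classical.decPred (obsP a c δ i)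
  unfold obsMC
  exact Nat.findGreatest_le _

theorem obsMC_spec (a c : ℕ → ℝ) {δ : ℝ} (hδ : 0 ≤ δ) {m i : ℕ} (hi : i ≤ m - 1) :
    obsP a c δ i (obsMC a c δ m i) := by
  letI := Classical.decPred (obsP a c δ i)
  unfold obsMC
  exact Nat.findGreatest_spec hi ⟨by linarith, by linarith⟩

theorem obsMC_gt (a c : ℕ → ℝ) (δ : ℝ) (m i n : ℕ) (h1 : obsMC a c δ m i < n)
    (h2 : n ≤ m - 1) : ¬ obsP a c δ i n := by
  letI := Classical.decPred (obsP a c δ i)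
  unfold obsMC at h1
  exact Nat.findGreatest_is_greatest h1 h2

end ObsAux

/-- Existence content of Observation 4.1 (center slabs): given `m ≥ b` sorted
disjoint segments across the slab `[0, Δ]` with left and right endpoint heights
in intervals of equal length `2^ℓ`, there are at most `2b + 1` selected segments,
starting with the lowest, such that consecutive selected segments are either at
most `m/b` apart in the ordering, or close (within `2^{ℓ-h}`) at both endpoints;
moreover there are rounded segments `s̃_j`, with endpoint heights `ã_j, c̃_j` on
grids of spacing `2^{ℓ-2h}` and obtained by raising the endpoints of the selected
segments by at most `2^{ℓ-2h}`, such that inside the center slab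
`[Δ·2^{-h}, Δ·(1 - 2^{-h})]` each `s̃_j` lies strictly below `s_{i_{j+2}}`. -/
theorem observation_center_slab
    (b h m : ℕ) (hb : 0 < b) (hh : 1 ≤ h) (hm : b ≤ m)
    (Δ : ℝ) (hΔ : 0 < Δ) (ℓ A C : ℝ)
    (a c : ℕ → ℝ)
    (ha_mono : ∀ i j, i < j → j < m → a i < a j)
    (hc_mono : ∀ i j, i < j → j < m → c i < c j)
    (ha_rng : ∀ i, i < m → a i ∈ Set.Icc A (A + (2:ℝ) ^ ℓ))
    (hc_rng : ∀ i, i < m → c i ∈ Set.Icc C (C + (2:ℝ) ^ ℓ)) :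
    ∃ (k : ℕ) (idx : ℕ → ℕ),
      k ≤ 2 * b ∧
      idx 0 = 0 ∧
      (∀ j, j < k → idx j < idx (j + 1)) ∧
      idx k ≤ m - 1 ∧
      ((m : ℝ) - 1 - (idx k : ℝ) ≤ (m : ℝ) / (b : ℝ)) ∧
      (∀ j, j < k →
        ((idx (j + 1) : ℝ) - (idx j : ℝ) ≤ (m : ℝ) / (b : ℝ)) ∨
        (a (idx (j + 1)) - a (idx j) ≤ (2:ℝ) ^ (ℓ - (h : ℝ)) ∧
         c (idx (j + 1)) - c (idx j) ≤ (2:ℝ) ^ (ℓ - (h : ℝ)))) ∧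
      ∃ ta tc : ℕ → ℝ,
        (∀ j j', j ≤ k → j' ≤ k →
          (∃ z : ℤ, ta j - ta j' = (z : ℝ) * (2:ℝ) ^ (ℓ - 2 * (h : ℝ))) ∧
          (∃ z : ℤ, tc j - tc j' = (z : ℝ) * (2:ℝ) ^ (ℓ - 2 * (h : ℝ)))) ∧
        (∀ j, j ≤ k →
          a (idx j) < ta j ∧ ta j ≤ a (idx j) + (2:ℝ) ^ (ℓ - 2 * (h : ℝ)) ∧
          c (idx j) < tc j ∧ tc j ≤ c (idx j) + (2:ℝ) ^ (ℓ - 2 * (h : ℝ))) ∧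
        (∀ j, j + 2 ≤ k →
          ∀ x ∈ Set.Icc (Δ * (2:ℝ) ^ (-(h : ℝ))) (Δ * (1 - (2:ℝ) ^ (-(h : ℝ)))),
            ta j + (tc j - ta j) * x / Δ <
              a (idx (j + 2)) + (c (idx (j + 2)) - a (idx (j + 2))) * x / Δ) := by
  classical
  set δ : ℝ := (2:ℝ) ^ (ℓ - (h : ℝ)) with hδdef
  set ε : ℝ := (2:ℝ) ^ (ℓ - 2 * (h : ℝ)) with hεdef
  set μ : ℝ := (2:ℝ) ^ (-(h : ℝ)) with hμdef
  have hδpos : 0 < δ := Real.rpow_pos_of_pos two_pos _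
  have hεpos : 0 < ε := Real.rpow_pos_of_pos two_pos _
  have hμpos : 0 < μ := Real.rpow_pos_of_pos two_pos _
  have hμδ : μ * δ = ε := by
    rw [hμdef, hδdef, hεdef, ← Real.rpow_add two_pos]
    congr 1
    ring
  have hδε : ε ≤ δ := by
    rw [hδdef, hεdef]
    apply Real.rpow_le_rpow_of_exponent_le one_le_two
    have : (0:ℝ) ≤ (h : ℝ) := Nat.cast_nonneg h
    linarith
  have hm1 : 1 ≤ m := le_trans hb hm
  set Q : ℕ := m / b with hQdef
  have hQ1 : 1 ≤ Q := (Nat.one_le_div_iff hb).mpr hm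
  set F : ℕ → ℕ := obsIdx a c δ m Q with hFdef
  have hF0 : F 0 = 0 := rfl
  have hstep : ∀ j, F (j + 1) = min (m - 1) (max (F j + Q) (obsMC a c δ m (F j))) :=
    fun j => rfl
  have hFle : ∀ j, F j ≤ m - 1 := by
    intro j
    cases j with
    | zero => simpa [hF0] using Nat.zero_le (m - 1)
    | succ n => rw [hstep]; exact min_le_left _ _
  have hstep' : ∀ j, F (j + 1) = m - 1 ∨ F j + Q ≤ F (j + 1) := by
    intro j
    rw [hstep j]
    rcases le_or_gt (m - 1) (max (F j + Q) (obsMC a c δ m (F j))) with hc' | hc'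
    · exact Or.inl (min_eq_left hc')
    · right
      rw [min_eq_right hc'.le]
      exact le_max_left _ _
  have hex : ∃ j, m - 1 ≤ F j + Q := by
    by_contra hcon
    push_neg at hcon
    have hmono : ∀ j, j * Q ≤ F j := by
      intro j
      induction j with
      | zero => simp
      | succ n ih =>
        rcases hstep' n with h1 | h1
        · exfalso
          have h2 := hcon (n + 1)
          omega
        · have e : (n + 1) * Q = n * Q + Q := by ring
          linarith
    have h1 := hmono m
    have h2 := hcon m
    have h3 : m * 1 ≤ m * Q := Nat.mul_le_mul_left m hQ1
    omega
  set k : ℕ := Nat.find hex with hkdef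
  have hk_stop : m - 1 ≤ F k + Q := Nat.find_spec hex
  have hk_min : ∀ j, j < k → F j + Q < m - 1 := by
    intro j hj
    have := Nat.find_min hex hj
    omega
  have hFstep : ∀ j, j < k → F j + Q ≤ F (j + 1) := by
    intro j hj
    rcases hstep' j with h1 | h1
    · have := hk_min j hj; omega
    · exact h1
  have hjQ : ∀ j, j ≤ k → j * Q ≤ F j := by
    intro j
    induction j with
    | zero => intro _; simp
    | succ n ih =>
      intro hn
      have h1 := hFstep n (by omega)
      have h2 := ih (by omega)
      have e : (n + 1) * Q = n * Q + Q := by ring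
      linarith
  -- the gap lemma
  have hgap : ∀ j, j + 2 ≤ k →
      δ < a (F (j + 2)) - a (F j) ∨ δ < c (F (j + 2)) - c (F j) := by
    intro j hj
    have hj0 : j < k := by omega
    have hj1 : j + 1 < k := by omega
    have h1 : obsMC a c δ m (F j) ≤ F (j + 1) := by
      rw [hstep j, min_eq_right (max_le (hk_min j hj0).le (obsMC_le a c δ m (F j)))]
      exact le_max_right _ _
    have h2 : F (j + 1) < F (j + 2) := by
      have h := hFstep (j + 1) hj1
      rw [show j + 1 + 1 = j + 2 by omega] at h
      omega
    have h3 : ¬ obsP a c δ (F j) (F (j + 2)) :=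
      obsMC_gt a c δ m (F j) (F (j + 2)) (by omega) (hFle _)
    rcases not_and_or.mp h3 with h | h
    · exact Or.inl (by linarith [not_le.mp h])
    · exact Or.inr (by linarith [not_le.mp h])
  -- k ≤ 2b
  have hkle : k ≤ 2 * b := by
    by_contra hcon
    push_neg at hcon
    obtain ⟨n, hkn⟩ : ∃ n, k = n + 1 := ⟨k - 1, by omega⟩
    have h2 : F n + Q < m - 1 := hk_min n (by omega)
    have h2' : F n + Q + 2 ≤ m := by omega
    have h3 : n * Q ≤ F n := hjQ n (by omega)
    have h4 : (2 * b + 1) * Q ≤ (n + 1) * Q := Nat.mul_le_mul_right Q (by omega)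
    have e1 : (n + 1) * Q = n * Q + Q := by ring
    have h6 : (2 * b + 1) * Q + 2 ≤ m := by linarith
    have hdm : b * Q + m % b = m := by
      rw [hQdef]; exact Nat.div_add_mod m b
    have hmod : m % b < b := Nat.mod_lt _ hb
    have e2 : (2 * b + 1) * Q = 2 * (b * Q) + Q := by ring
    have hmlt : m < 2 * b := by linarith
    have hQ2 : Q < 2 := by
      rw [hQdef]
      exact Nat.div_lt_of_lt_mul (by omega)
    have hQeq : Q = 1 := by omega
    rw [hQeq] at h6
    omega
  -- stopping bound as reals
  have hcast_stop : (m : ℝ) - 1 - (F k : ℝ) ≤ (m : ℝ) / (b : ℝ) := by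
    have h1 : ((m - 1 : ℕ) : ℝ) ≤ ((F k + Q : ℕ) : ℝ) := Nat.cast_le.mpr hk_stop
    rw [Nat.cast_sub hm1] at h1
    push_cast at h1
    have h2 : ((Q : ℕ) : ℝ) ≤ (m : ℝ) / (b : ℝ) := by
      rw [hQdef]; exact Nat.cast_div_le
    linarith
  -- rounding
  set ta : ℕ → ℝ := fun j => A + (⌊(a (F j) - A) / ε⌋ + 1) * ε with htadef
  set tc : ℕ → ℝ := fun j => C + (⌊(c (F j) - C) / ε⌋ + 1) * ε with htcdef
  have hround : ∀ y : ℝ, y < (⌊y / ε⌋ + 1 : ℝ) * ε ∧ (⌊y / ε⌋ + 1 : ℝ) * ε ≤ y + ε := by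
    intro y
    have h1 : y / ε < (⌊y / ε⌋ : ℝ) + 1 := Int.lt_floor_add_one _
    have h2 : (⌊y / ε⌋ : ℝ) ≤ y / ε := Int.floor_le _
    constructor
    · have := (div_lt_iff₀ hεpos).mp h1
      linarith
    · have h3 := (le_div_iff₀ hεpos).mp h2
      linarith
  have hta1 : ∀ j, a (F j) < ta j := by
    intro j
    have := (hround (a (F j) - A)).1
    simp only [htadef]
    push_cast
    linarith
  have hta2 : ∀ j, ta j ≤ a (F j) + ε := by
    intro j
    have := (hround (a (F j) - A)).2
    simp only [htadef]
    push_cast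
    linarith
  have htc1 : ∀ j, c (F j) < tc j := by
    intro j
    have := (hround (c (F j) - C)).1
    simp only [htcdef]
    push_cast
    linarith
  have htc2 : ∀ j, tc j ≤ c (F j) + ε := by
    intro j
    have := (hround (c (F j) - C)).2
    simp only [htcdef]
    push_cast
    linarith
  refine ⟨k, F, hkle, hF0, ?_, hFle k, hcast_stop, ?_, ta, tc, ?_, ?_, ?_⟩
  · -- monotone
    intro j hj
    have := hFstep j hj
    omega
  · -- condition (1)
    intro j hj
    have hlt := hk_min j hj
    rcases le_or_gt (obsMC a c δ m (F j)) (F j + Q) with hMC | hMC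
    · left
      have hFj1 : F (j + 1) = F j + Q := by
        rw [hstep j, max_eq_left hMC, min_eq_right (by omega)]
      rw [hFj1]
      push_cast
      have h2 : ((Q : ℕ) : ℝ) ≤ (m : ℝ) / (b : ℝ) := by
        rw [hQdef]; exact Nat.cast_div_le
      linarith
    · right
      have hFj1 : F (j + 1) = obsMC a c δ m (F j) := by
        rw [hstep j, max_eq_right hMC.le, min_eq_right (obsMC_le a c δ m (F j))]
      have hP := obsMC_spec a c hδpos.le (hFle j) (m := m)
      rw [hFj1]
      exact ⟨by linarith [hP.1], by linarith [hP.2]⟩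
  · -- (2a) grid
    intro j j' _ _
    constructor
    · exact ⟨⌊(a (F j) - A) / ε⌋ - ⌊(a (F j') - A) / ε⌋, by simp only [htadef]; push_cast; ring⟩
    · exact ⟨⌊(c (F j) - C) / ε⌋ - ⌊(c (F j') - C) / ε⌋, by simp only [htcdef]; push_cast; ring⟩
  · -- (2b) bounds
    intro j _
    exact ⟨hta1 j, hta2 j, htc1 j, htc2 j⟩
  · -- (2c) center slab
    intro j hj x hx
    obtain ⟨hx1, hx2⟩ := hx
    set t : ℝ := x / Δ with htdef
    have ht1 : μ ≤ t := by
      rw [htdef, le_div_iff₀ hΔ]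
      linarith [hx1]
    have ht2 : t ≤ 1 - μ := by
      rw [htdef, div_le_iff₀ hΔ]
      linarith [hx2]
    have hmul : ∀ u v : ℝ, u + (v - u) * x / Δ = (1 - t) * u + t * v := by
      intro u v
      rw [htdef]
      field_simp
      ring
    rw [hmul (ta j) (tc j), hmul (a (F (j + 2))) (c (F (j + 2)))]
    have hFlt : F j < F (j + 2) := by
      have h1 := hFstep j (by omega)
      have h2 := hFstep (j + 1) (by omega)
      rw [show j + 1 + 1 = j + 2 by omega] at h2
      omega
    have hFm : F (j + 2) < m := by
      have := hFle (j + 2); omega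
    have h1t : 0 < 1 - t := by linarith
    have h0t : 0 < t := by linarith
    rcases hgap j hj with hg | hg
    · have hcg : c (F j) < c (F (j + 2)) := hc_mono _ _ hFlt hFm
      have hA : (1 - t) * (δ - ε) < (1 - t) * (a (F (j + 2)) - ta j) := by
        apply mul_lt_mul_of_pos_left _ h1t
        have := hta2 j
        linarith
      have hB : t * (-ε) < t * (c (F (j + 2)) - tc j) := by
        apply mul_lt_mul_of_pos_left _ h0t
        have := htc2 j
        linarith
      have hC : μ * δ ≤ (1 - t) * δ := mul_le_mul_of_nonneg_right (by linarith) hδpos.le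
      linarith [hA, hB, hC, hμδ]
    · have hag : a (F j) < a (F (j + 2)) := ha_mono _ _ hFlt hFm
      have hA : t * (δ - ε) < t * (c (F (j + 2)) - tc j) := by
        apply mul_lt_mul_of_pos_left _ h0t
        have := htc2 j
        linarith
      have hB : (1 - t) * (-ε) < (1 - t) * (a (F (j + 2)) - ta j) := by
        apply mul_lt_mul_of_pos_left _ h1t
        have := hta2 j
        linarith
      have hC : μ * δ ≤ t * δ := mul_le_mul_of_nonneg_right ht1 hδpos.le
      linarith [hA, hB, hC, hμδ]
end

section
/- Let b, h, m be positive integers with m ≥ b and h ≥ 1, let Δ > 0 and ℓ, A, C be reals. Suppose a_0 < a_1 < ⋯ < a_{m−1} and c_0 < c_1 < ⋯ < c_{m−1} are the endpoint heights of m sorted pairwise disjoint segments across the slab [0, Δ], with a_i ∈ [A, A + 2^{ℓ}] and c_i ∈ [C, C + 2^{ℓ}] for all i; write f_i = f_{a_i, c_i}. Then there exist an integer k with 0 ≤ k ≤ 2b and indices 0 = i_0 < i_1 < ⋯ < i_k ≤ m − 1 such that: (0) m − 1 − i_k ≤ m/b; (1) for every j < k, either (1a) i_{j+1} − i_j ≤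 m/b, or (1b) for every x ∈ [0, Δ·2^{−h}], f_{i_{j+1}}(x) − f_{i_j}(x) < 2^{ℓ−h+1}; and (2) there exist affine functions g_0, …, g_k defined on [0, Δ·2^{−h}] such that (2a) for all j, j′ ≤ k, the difference g_j(0) − g_{j′}(0) is an integer multiple of 2^{ℓ−2h}; (2b) for all j, j′ ≤ k, the difference g_j(Δ·2^{−h}) − g_{j′}(Δ·2^{−h}) is an integer multiple of 2^{ℓ−2h}; and (2c) for every j ≤ k and every x ∈ [0, Δ·2^{−h}], f_{i_j}(x) < g_j(x), and whenever j + 2 ≤ k also g_j(x) < f_{i_{j+2}}(x). -/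

private lemma key_pos {A B L x : ℝ} (hL : 0 < L) (hA : 0 < A) (hB : 0 < B)
    (hx0 : 0 ≤ x) (hxL : x ≤ L) : 0 < A * (L - x) + B * x := by
  rcases eq_or_lt_of_le hxL with heq | hlt
  · subst heq; nlinarith [mul_pos hB hL]
  · nlinarith [mul_pos hA (sub_pos.2 hlt), mul_nonneg hB.le hx0]

private lemma aux_affine {p1 q1 p2 q2 L x : ℝ} (hL : 0 < L) (hx0 : 0 ≤ x) (hxL : x ≤ L)
    (h0 : p1 < p2) (h1 : q1 < q2) :
    p1 + (q1 - p1) * x / L < p2 + (q2 - p2) * x / L := by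
  rw [← sub_pos]
  have e : p2 + (q2 - p2) * x / L - (p1 + (q1 - p1) * x / L)
      = ((p2 - p1) * (L - x) + (q2 - q1) * x) / L := by
    field_simp; ring
  rw [e]
  exact div_pos (key_pos hL (by linarith) (by linarith) hx0 hxL) hL

private lemma aux_affine_diff {p1 q1 p2 q2 L x M : ℝ} (hL : 0 < L) (hx0 : 0 ≤ x) (hxL : x ≤ L)
    (h0 : p1 - p2 < M) (h1 : q1 - q2 < M) :
    (p1 + (q1 - p1) * x / L) - (p2 + (q2 - p2) * x / L) < M := by
  rw [← sub_pos]
  have e : M - ((p1 + (q1 - p1) * x / L) - (p2 + (q2 - p2) * x / L))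
      = ((M - (p1 - p2)) * (L - x) + (M - (q1 - q2)) * x) / L := by
    field_simp; ring
  rw [e]
  exact div_pos (key_pos hL (by linarith) (by linarith) hx0 hxL) hL

private lemma floor_bounds {d y : ℝ} (hd : 0 < d) :
    y < d * ((⌊y / d⌋ : ℝ) + 1) ∧ d * ((⌊y / d⌋ : ℝ) + 1) ≤ y + d := by
  have h3 : (⌊y / d⌋ : ℝ) * d ≤ y := (le_div_iff₀ hd).1 (Int.floor_le _)
  have h4 : y < ((⌊y / d⌋ : ℝ) + 1) * d := (div_lt_iff₀ hd).1 (Int.lt_floor_add_one _)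
  constructor <;> nlinarith

set_option maxHeartbeats 1000000 in
/-- Existence content of Observation 4.2 (lateral slabs): given `m ≥ b` sorted
disjoint segments across the slab `[0, Δ]` with left and right endpoint heights in
intervals of equal length `2^ℓ`, there are at most `2b + 1` selected segments,
starting with the lowest, such that consecutive selected segments are either at
most `m/b` apart in the ordering or vertically separated by less than `2^{ℓ-h+1}`
everywhere in the left slab `[0, Δ·2^{-h}]`; moreover there are affine functions
`g_j` on the left slab, with values at the boundaries of the left slab lying on
grids of spacing `2^{ℓ-2h}`, such that inside the left slab each `g_j` lies
strictly above `s_{i_j}` and strictly below `s_{i_{j+2}}`. -/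
theorem observation_left_slab
    (b h m : ℕ) (hb : 0 < b) (hh : 1 ≤ h) (hm : b ≤ m)
    (Δ : ℝ) (hΔ : 0 < Δ) (ℓ A C : ℝ)
    (a c : ℕ → ℝ)
    (ha_mono : ∀ i j, i < j → j < m → a i < a j)
    (hc_mono : ∀ i j, i < j → j < m → c i < c j)
    (ha_rng : ∀ i, i < m → a i ∈ Set.Icc A (A + (2:ℝ) ^ ℓ))
    (hc_rng : ∀ i, i < m → c i ∈ Set.Icc C (C + (2:ℝ) ^ ℓ)) :
    ∃ (k : ℕ) (idx : ℕ → ℕ),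
      k ≤ 2 * b ∧
      idx 0 = 0 ∧
      (∀ j, j < k → idx j < idx (j + 1)) ∧
      idx k ≤ m - 1 ∧
      ((m : ℝ) - 1 - (idx k : ℝ) ≤ (m : ℝ) / (b : ℝ)) ∧
      (∀ j, j < k →
        ((idx (j + 1) : ℝ) - (idx j : ℝ) ≤ (m : ℝ) / (b : ℝ)) ∨
        (∀ x ∈ Set.Icc (0:ℝ) (Δ * (2:ℝ) ^ (-(h : ℝ))),
          (a (idx (j + 1)) + (c (idx (j + 1)) - a (idx (j + 1))) * x / Δ) -
            (a (idx j) + (c (idx j) - a (idx j)) * x / Δ) <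
          (2:ℝ) ^ (ℓ - (h : ℝ) + 1))) ∧
      ∃ g : ℕ → ℝ → ℝ,
        (∀ j, j ≤ k → ∃ p q : ℝ, ∀ x, g j x = p * x + q) ∧
        (∀ j j', j ≤ k → j' ≤ k →
          ∃ z : ℤ, g j 0 - g j' 0 = (z : ℝ) * (2:ℝ) ^ (ℓ - 2 * (h : ℝ))) ∧
        (∀ j j', j ≤ k → j' ≤ k →
          ∃ z : ℤ, g j (Δ * (2:ℝ) ^ (-(h : ℝ))) - g j' (Δ * (2:ℝ) ^ (-(h : ℝ))) =
            (z : ℝ) * (2:ℝ) ^ (ℓ - 2 * (h : ℝ))) ∧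
        (∀ j, j ≤ k → ∀ x ∈ Set.Icc (0:ℝ) (Δ * (2:ℝ) ^ (-(h : ℝ))),
          (a (idx j) + (c (idx j) - a (idx j)) * x / Δ) < g j x ∧
          (j + 2 ≤ k →
            g j x < a (idx (j + 2)) + (c (idx (j + 2)) - a (idx (j + 2))) * x / Δ)) := by
  classical
  have hm1 : 1 ≤ m := hb.trans_le hm
  -- real constants
  set Λ : ℝ := (2:ℝ) ^ (-(h:ℝ)) with hΛ_def
  set x₁ : ℝ := Δ * Λ with hx₁_def
  set δ : ℝ := (2:ℝ) ^ (ℓ - 2 * (h:ℝ)) with hδ_def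
  set E : ℝ := (2:ℝ) ^ ℓ with hE_def
  have hΛpos : 0 < Λ := Real.rpow_pos_of_pos two_pos _
  have hx₁pos : 0 < x₁ := mul_pos hΔ hΛpos
  have hδpos : 0 < δ := Real.rpow_pos_of_pos two_pos _
  have hEpos : 0 < E := Real.rpow_pos_of_pos two_pos _
  set D : ℝ := (2:ℝ) ^ (ℓ - (h:ℝ)) with hD_def
  have hDpos : 0 < D := Real.rpow_pos_of_pos two_pos _
  have h1h : (1:ℝ) ≤ (h:ℝ) := by exact_mod_cast hh
  have hΛle : Λ ≤ 1/2 := by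
    have e1 : (2:ℝ) ^ (-(1:ℝ)) = 1/2 := by
      rw [show (-(1:ℝ)) = ((-1 : ℤ) : ℝ) by norm_num, Real.rpow_intCast]; norm_num
    rw [hΛ_def, ← e1]
    exact Real.rpow_le_rpow_of_exponent_le one_le_two (by linarith)
  have hΛE : Λ * E = D := by
    rw [hΛ_def, hE_def, hD_def, ← Real.rpow_add two_pos]
    congr 1; ring
  have h2D : (2:ℝ) ^ (ℓ - (h:ℝ) + 1) = 2 * D := by
    rw [hD_def, Real.rpow_add two_pos, Real.rpow_one]; ring
  have h2δD : 2 * δ ≤ D := by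
    have e : 2 * δ = (2:ℝ) ^ (ℓ - 2*(h:ℝ) + 1) := by
      rw [hδ_def, Real.rpow_add two_pos, Real.rpow_one]; ring
    rw [e, hD_def]
    exact Real.rpow_le_rpow_of_exponent_le one_le_two (by linarith)
  -- right-end heights
  set w : ℕ → ℝ := fun i => a i + (c i - a i) * Λ with hw_def
  have hf_eq : ∀ (i : ℕ) (x : ℝ),
      a i + (c i - a i) * x / Δ = a i + (w i - a i) * x / x₁ := by
    intro i x
    simp only [hw_def, hx₁_def]
    field_simp
    ring
  have hw_sub : ∀ i i', w i' - w i =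
      (a i' - a i) + Λ * ((c i' - c i) - (a i' - a i)) := by
    intro i i'
    simp only [hw_def]; ring
  -- natural-number machinery
  set s : ℕ := m / b with hs_def
  have hs1 : 1 ≤ s := (Nat.one_le_div_iff hb).2 hm
  have hs_cast : ((s : ℕ) : ℝ) ≤ (m : ℝ) / (b : ℝ) := by
    rw [hs_def]; exact Nat.cast_div_le
  have hTex : ∃ t, m - 1 ≤ t * s := by
    refine ⟨m, ?_⟩
    have := Nat.le_mul_of_pos_right m hs1
    exact le_trans (Nat.sub_le m 1) this
  set T : ℕ := Nat.find hTex with hT_def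
  have hT_spec : m - 1 ≤ T * s := Nat.find_spec hTex
  have hT_min : ∀ t, t < T → t * s < m - 1 := by
    intro t ht
    exact Nat.lt_of_not_le (Nat.find_min hTex ht)
  have hT2b : T ≤ 2 * b := by
    apply Nat.find_min' hTex
    have h1 : b * s + m % b = m := by rw [hs_def]; exact Nat.div_add_mod m b
    have h2 : m % b < b := Nat.mod_lt _ hb
    have h3 : b ≤ b * s := Nat.le_mul_of_pos_right _ hs1
    obtain ⟨X, hX1, hX2, hX3⟩ : ∃ X, b ≤ X ∧ X + m % b = m ∧ 2 * b * s = 2 * X :=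
      ⟨b * s, h3, h1, by ring⟩
    rw [hX3]
    omega
  set r : ℕ → ℕ := fun t => min (t * s) (m - 1) with hr_def
  have hr0 : r 0 = 0 := by simp [hr_def]
  have hr_le : ∀ t, r t ≤ m - 1 := fun t => min_le_right _ _
  have hr_lt_m : ∀ t, r t < m := fun t => lt_of_le_of_lt (hr_le t) (by omega)
  have hr_eq : ∀ t, t < T → r t = t * s := by
    intro t ht
    exact min_eq_left (hT_min t ht).le
  have hr_step : ∀ t, r (t + 1) ≤ t * s + s := by
    intro t
    have : (t + 1) * s = t * s + s := by ring
    exact le_trans (min_le_left _ _) (le_of_eq this)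
  have hrT : r T = m - 1 := min_eq_right hT_spec
  have hr_mono : ∀ t t', t < t' → t' ≤ T → r t < r t' := by
    intro t t' hlt hle
    have ht : t < T := lt_of_lt_of_le hlt hle
    rw [hr_eq t ht]
    rcases eq_or_lt_of_le hle with rfl | ht'
    · rw [hrT]; exact hT_min t ht
    · rw [hr_eq t' ht']
      exact (Nat.mul_lt_mul_right hs1).2 hlt
  set P : ℕ → ℕ → Prop := fun t t' => t < t' ∧ a (r t') ≤ a (r t) + 2 * δ with hP_def
  set next : ℕ → ℕ :=
    fun t => if T ≤ t then T else max (t + 1) (Nat.findGreatest (P t) T) with hnext_def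
  have hnext_leT : ∀ t, next t ≤ T := by
    intro t
    simp only [hnext_def]
    split
    · exact le_refl T
    · next hc => exact max_le (by omega) (Nat.findGreatest_le T)
  have hnextT : next T = T := by simp [hnext_def]
  have hnext_gt : ∀ t, t < T → t < next t := by
    intro t ht
    simp only [hnext_def, if_neg (not_le.2 ht)]
    exact lt_of_lt_of_le (Nat.lt_succ_self t) (le_max_left _ _)
  have hnext_prop : ∀ t, t < T → next t = t + 1 ∨ a (r (next t)) ≤ a (r t) + 2 * δ := by
    intro t ht
    simp only [hnext_def, if_neg (not_le.2 ht)]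
    rcases le_or_gt (Nat.findGreatest (P t) T) (t + 1) with hc | hc
    · left; exact max_eq_left hc
    · right
      rw [max_eq_right hc.le]
      have hspec := (Nat.findGreatest_eq_iff (P := P t) (k := T)
        (m := Nat.findGreatest (P t) T)).1 rfl
      have hPg := hspec.2.1 (by omega)
      simp only [hP_def] at hPg
      exact hPg.2
  have hnext_far : ∀ t, t < T → ∀ t'', next t < t'' → t'' ≤ T →
      a (r t) + 2 * δ < a (r t'') := by
    intro t ht t'' h1 h2
    have hle : Nat.findGreatest (P t) T ≤ next t := by
      simp only [hnext_def, if_neg (not_le.2 ht)]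
      exact le_max_right _ _
    have hnp : ¬ P t t'' := Nat.findGreatest_is_greatest (lt_of_le_of_lt hle h1) h2
    have ht'' : t < t'' := lt_trans (hnext_gt t ht) h1
    simp only [hP_def] at hnp
    push_neg at hnp
    exact hnp ht''
  set u : ℕ → ℕ := fun j => next^[j] 0 with hu_def
  have hu0 : u 0 = 0 := rfl
  have hu_succ : ∀ j, u (j + 1) = next (u j) := by
    intro j
    simp only [hu_def]
    exact Function.iterate_succ_apply' next j 0
  have hu_leT : ∀ j, u j ≤ T := by
    intro j
    induction j with
    | zero => rw [hu0]; exact Nat.zero_le _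
    | succ j ih => rw [hu_succ]; exact hnext_leT _
  have hu_cases : ∀ j, u j = T ∨ (j ≤ u j ∧ u j < T) := by
    intro j
    induction j with
    | zero =>
      rcases Nat.eq_zero_or_pos T with hT0 | hT0
      · left; rw [hu0, hT0]
      · right; exact ⟨le_refl 0, by rw [hu0]; exact hT0⟩
    | succ j ih =>
      rcases ih with hT0 | ⟨h1, h2⟩
      · left; rw [hu_succ, hT0, hnextT]
      · have h3 : u j < u (j + 1) := by rw [hu_succ]; exact hnext_gt _ h2
        rcases eq_or_lt_of_le (hu_leT (j + 1)) with heq | hlt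
        · left; exact heq
        · right; exact ⟨by omega, hlt⟩
  have huT : u T = T := by
    rcases hu_cases T with h | ⟨h1, h2⟩
    · exact h
    · omega
  have hkex : ∃ jj, u jj = T := ⟨T, huT⟩
  set k : ℕ := Nat.find hkex with hk_def
  have hk_spec : u k = T := Nat.find_spec hkex
  have hk_min : ∀ j, j < k → u j < T := fun j hj =>
    lt_of_le_of_ne (hu_leT j) (Nat.find_min hkex hj)
  have hkT : k ≤ T := Nat.find_min' hkex huT
  have hk2b : k ≤ 2 * b := le_trans hkT hT2b
  have hu_mono : ∀ j, j < k → u j < u (j + 1) := by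
    intro j hj
    rw [hu_succ]
    exact hnext_gt _ (hk_min j hj)
  -- key separation facts for the g construction
  have hfar : ∀ j, j + 2 ≤ k → a (r (u j)) + 2 * δ < a (r (u (j + 2))) := by
    intro j hj
    have h1 : u j < T := hk_min j (by omega)
    have h2 : u (j + 1) < T := hk_min _ (by omega)
    have h3 : u (j + 2) ≤ T := hu_leT _
    have h4 : next (u j) < u (j + 2) := by
      rw [← hu_succ]
      have h5 : u (j + 1) < u (j + 1 + 1) := by
        rw [hu_succ (j+1)]; exact hnext_gt _ h2
      exact h5
    exact hnext_far _ h1 _ h4 h3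
  have hidx_lt : ∀ j j', j < j' → j' ≤ k → r (u j) < r (u j') := by
    intro j j' hlt hle
    apply hr_mono
    · clear hfar
      induction j' with
      | zero => omega
      | succ n ih =>
        rcases Nat.lt_or_ge j n with hc | hc
        · exact lt_trans (ih hc (by omega)) (hu_mono n (by omega))
        · have : j = n := by omega
          subst this
          exact hu_mono j (by omega)
    · exact hu_leT _
  have hc_le : ∀ i i', i < m → i' < m → c i' - c i ≤ E := by
    intro i i' hi hi'
    have h1 := (hc_rng i hi).1
    have h2 := (hc_rng i' hi').2
    linarith
  have hfar_w : ∀ j, j + 2 ≤ k → w (r (u j)) + δ < w (r (u (j + 2))) := by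
    intro j hj
    have hlt : r (u j) < r (u (j + 2)) := hidx_lt j (j + 2) (by omega) hj
    have hΔa := hfar j hj
    have hΔc : c (r (u j)) < c (r (u (j + 2))) := hc_mono _ _ hlt (hr_lt_m _)
    have hwe := hw_sub (r (u j)) (r (u (j + 2)))
    have ha_pos : (0:ℝ) < a (r (u (j+2))) - a (r (u j)) := by nlinarith
    nlinarith [mul_pos hΛpos (sub_pos.2 hΔc),
      mul_le_mul_of_nonneg_right hΛle ha_pos.le]
  -- grid values
  set pp : ℕ → ℝ := fun j => δ * ((⌊a (r (u j)) / δ⌋ : ℝ) + 1) with hpp_def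
  set qq : ℕ → ℝ := fun j => δ * ((⌊w (r (u j)) / δ⌋ : ℝ) + 1) with hqq_def
  have hpp1 : ∀ j, a (r (u j)) < pp j := fun j => (floor_bounds hδpos).1
  have hpp2 : ∀ j, pp j ≤ a (r (u j)) + δ := fun j => (floor_bounds hδpos).2
  have hqq1 : ∀ j, w (r (u j)) < qq j := fun j => (floor_bounds hδpos).1
  have hqq2 : ∀ j, qq j ≤ w (r (u j)) + δ := fun j => (floor_bounds hδpos).2
  have hpp_sub : ∀ j j', ∃ z : ℤ, pp j - pp j' = (z : ℝ) * δ := by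
    intro j j'
    refine ⟨⌊a (r (u j)) / δ⌋ - ⌊a (r (u j')) / δ⌋, ?_⟩
    simp only [hpp_def]
    push_cast
    ring
  have hqq_sub : ∀ j j', ∃ z : ℤ, qq j - qq j' = (z : ℝ) * δ := by
    intro j j'
    refine ⟨⌊w (r (u j)) / δ⌋ - ⌊w (r (u j')) / δ⌋, ?_⟩
    simp only [hqq_def]
    push_cast
    ring
  clear hpp_def hqq_def hu_def hnext_def hP_def hr_def hk_def hT_def hw_def
    hδ_def hΛ_def hx₁_def hE_def hD_def hs_def hu_cases huT
  clear_value pp qq k u next P r T s w D E δ x₁ Λ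
  refine ⟨k, fun j => r (u j), hk2b, ?_, ?_, ?_, ?_, ?_, ?_⟩
  · -- idx 0 = 0
    show r (u 0) = 0
    rw [hu0, hr0]
  · -- strict monotone
    intro j hj
    beta_reduce
    exact hidx_lt j (j + 1) (by omega) (by omega)
  · -- idx k ≤ m - 1
    exact hr_le _
  · -- tail
    show (m:ℝ) - 1 - ((r (u k) : ℕ) : ℝ) ≤ (m:ℝ) / (b:ℝ)
    rw [hk_spec, hrT]
    have e1 : ((m - 1 : ℕ) : ℝ) = (m : ℝ) - 1 := by
      push_cast [Nat.cast_sub hm1]; ring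
    rw [e1]
    have : (0:ℝ) ≤ (m:ℝ) / (b:ℝ) := by positivity
    linarith
  · -- condition (1)
    intro j hj
    have hujT : u j < T := hk_min j hj
    rcases hnext_prop (u j) hujT with hadj | hnear
    · left
      beta_reduce
      have e1 : u (j + 1) = u j + 1 := by rw [hu_succ, hadj]
      have h1 : r (u j) = u j * s := hr_eq _ hujT
      have h2 : r (u (j + 1)) ≤ u j * s + s := by
        rw [e1]; exact hr_step _
      have h3 : r (u (j + 1)) ≤ r (u j) + s := by omega
      have h4 : ((r (u (j+1)) : ℕ) : ℝ) ≤ ((r (u j) : ℕ) : ℝ) + (s : ℝ) := by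
        exact_mod_cast h3
      linarith [hs_cast]
    · right
      intro x hx
      beta_reduce
      rw [Set.mem_Icc] at hx
      have hnear' : a (r (u (j + 1))) ≤ a (r (u j)) + 2 * δ := by
        rwa [← hu_succ] at hnear
      have hlt : r (u j) < r (u (j + 1)) := hidx_lt j (j + 1) (by omega) (by omega)
      have hΔa0 : a (r (u j)) < a (r (u (j + 1))) := ha_mono _ _ hlt (hr_lt_m _)
      have hΔc0 : c (r (u j)) < c (r (u (j + 1))) := hc_mono _ _ hlt (hr_lt_m _)
      have hΔcE : c (r (u (j+1))) - c (r (u j)) ≤ E := hc_le _ _ (hr_lt_m _) (hr_lt_m _)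
      rw [hf_eq (r (u (j+1))) x, hf_eq (r (u j)) x, h2D]
      apply aux_affine_diff hx₁pos hx.1 hx.2
      · linarith
      · have hwe := hw_sub (r (u j)) (r (u (j + 1)))
        have hp1 : Λ * (c (r (u (j+1))) - c (r (u j))) ≤ Λ * E :=
          mul_le_mul_of_nonneg_left hΔcE hΛpos.le
        have hp2 : 0 < Λ * (a (r (u (j+1))) - a (r (u j))) :=
          mul_pos hΛpos (sub_pos.2 hΔa0)
        have hwe2 : w (r (u (j+1))) - w (r (u j)) =
            (a (r (u (j+1))) - a (r (u j)))
              + Λ * (c (r (u (j+1))) - c (r (u j)))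
              - Λ * (a (r (u (j+1))) - a (r (u j))) := by
          rw [hwe]; ring
        linarith [hΛE, h2δD, hDpos]
  · -- the g functions
    refine ⟨fun j x => pp j + (qq j - pp j) * x / x₁, ?_, ?_, ?_, ?_⟩
    · intro j _
      exact ⟨(qq j - pp j) / x₁, pp j, fun x => by ring⟩
    · intro j j' _ _
      show ∃ z : ℤ, pp j + (qq j - pp j) * 0 / x₁ - (pp j' + (qq j' - pp j') * 0 / x₁)
        = (z : ℝ) * δ
      simp only [mul_zero, zero_div, add_zero]
      exact hpp_sub j j'
    · intro j j' _ _
      show ∃ z : ℤ, pp j + (qq j - pp j) * x₁ / x₁ - (pp j' + (qq j' - pp j') * x₁ / x₁)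
        = (z : ℝ) * δ
      rw [mul_div_cancel_right₀ _ hx₁pos.ne', mul_div_cancel_right₀ _ hx₁pos.ne']
      have e : ∀ y1 y2 : ℝ, y1 + (y2 - y1) = y2 := fun _ _ => by ring
      rw [e, e]
      exact hqq_sub j j'
    · intro j hj x hx
      beta_reduce
      rw [Set.mem_Icc] at hx
      constructor
      · rw [hf_eq (r (u j)) x]
        exact aux_affine hx₁pos hx.1 hx.2 (hpp1 j) (hqq1 j)
      · intro hj2
        rw [hf_eq (r (u (j + 2))) x]
        apply aux_affine hx₁pos hx.1 hx.2
        · have h1 := hfar j hj2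
          have h2 := hpp2 j
          linarith
        · have h1 := hfar_w j hj2
          have h2 := hqq2 j
          linarith
end

section
/- Let W ≥ 1 be an integer and let m segments t_0, …, t_{m−1} be given, where t_i joins the point (0, a_i) to the point (W, c_i), with a_i and c_i integers in {0, 1, …, W}, and a_0 < a_1 < ⋯ < a_{m−1} and c_0 < c_1 < ⋯ < c_{m−1}. Then for any reals u and v, the closed axis-parallel unit square [u, u+1] × [v, v+1] has nonempty intersection with at most two of the segments t_0, …, t_{m−1}. -/
/-- Any closed axis-parallel unit square intersects at most two of `m` disjoint
segments joining `(0, a_i)` to `(W, c_i)` whose endpoint heights are strictly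
increasing integers in `{0, …, W}`. -/
theorem unit_square_meets_at_most_two_segments
    (W : ℕ) (hW : 1 ≤ W) (m : ℕ) (a c : ℕ → ℤ)
    (ha_rng : ∀ i, i < m → a i ∈ Set.Icc (0:ℤ) (W:ℤ))
    (hc_rng : ∀ i, i < m → c i ∈ Set.Icc (0:ℤ) (W:ℤ))
    (ha_mono : ∀ i j, i < j → j < m → a i < a j)
    (hc_mono : ∀ i j, i < j → j < m → c i < c j)
    (u v : ℝ) :
    {i : ℕ | i < m ∧ ∃ x ∈ Set.Icc (0:ℝ) (W:ℝ),
        (x, (a i : ℝ) + ((c i : ℝ) - (a i : ℝ)) * x / (W:ℝ)) ∈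
          Set.Icc u (u + 1) ×ˢ Set.Icc v (v + 1)}.ncard ≤ 2 := by
  set S := {i : ℕ | i < m ∧ ∃ x ∈ Set.Icc (0:ℝ) (W:ℝ),
        (x, (a i : ℝ) + ((c i : ℝ) - (a i : ℝ)) * x / (W:ℝ)) ∈
          Set.Icc u (u + 1) ×ˢ Set.Icc v (v + 1)} with hSdef
  have hfin : S.Finite :=
    (Set.finite_Icc 0 m).subset (fun i hi => ⟨Nat.zero_le _, hi.1.le⟩)
  -- key lemma: no three indices i < j < k all in S
  have key : ∀ i j k : ℕ, i < j → j < k → i ∈ S → k ∈ S → False := by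
    intro i j k hij hjk hiS hkS
    obtain ⟨him, x, hx0W, hx⟩ := hiS
    obtain ⟨hkm, y, hy0W, hy⟩ := hkS
    have hjm : j < m := lt_trans hjk hkm
    have Wpos : (0:ℝ) < (W:ℝ) := by exact_mod_cast hW
    -- integer gaps
    have ha2 : a i + 2 ≤ a k := by
      have h1 := ha_mono i j hij hjm
      have h2 := ha_mono j k hjk hkm
      omega
    have hc2 : c i + 2 ≤ c k := by
      have h1 := hc_mono i j hij hjm
      have h2 := hc_mono j k hjk hkm
      omega
    obtain ⟨hai0, haiW⟩ := ha_rng i him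
    obtain ⟨hci0, hciW⟩ := hc_rng i him
    obtain ⟨hak0, hakW⟩ := ha_rng k hkm
    obtain ⟨hck0, hckW⟩ := hc_rng k hkm
    -- cast to reals
    have hA2 : (a i : ℝ) + 2 ≤ (a k : ℝ) := by exact_mod_cast ha2
    have hC2 : (c i : ℝ) + 2 ≤ (c k : ℝ) := by exact_mod_cast hc2
    have hAi0 : (0:ℝ) ≤ (a i : ℝ) := by exact_mod_cast hai0
    have hAiW : (a i : ℝ) ≤ (W:ℝ) := by exact_mod_cast haiW
    have hCi0 : (0:ℝ) ≤ (c i : ℝ) := by exact_mod_cast hci0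
    have hCiW : (c i : ℝ) ≤ (W:ℝ) := by exact_mod_cast hciW
    have hAkW : (a k : ℝ) ≤ (W:ℝ) := by exact_mod_cast hakW
    have hCkW : (c k : ℝ) ≤ (W:ℝ) := by exact_mod_cast hckW
    obtain ⟨hx0, hxW⟩ := hx0W
    obtain ⟨hy0, hyW⟩ := hy0W
    obtain ⟨⟨hxu, hxu1⟩, ⟨hxv, hxv1⟩⟩ := hx
    obtain ⟨⟨hyu, hyu1⟩, ⟨hyv, hyv1⟩⟩ := hy
    simp only at hxv hxv1 hyv hyv1
    -- integrality of slope: either |c i - a i| = W or ≤ W - 1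
    have hslope : c i - a i = (W:ℤ) ∨ c i - a i = -(W:ℤ) ∨
        (c i - a i ≤ (W:ℤ) - 1 ∧ -((W:ℤ) - 1) ≤ c i - a i) := by omega
    rcases hslope with h | h | ⟨h1, h2⟩
    · -- c i - a i = W forces a i = 0, c i = W, then c k ≥ W + 2 > W
      omega
    · omega
    · have hs1 : (c i : ℝ) - (a i : ℝ) ≤ (W:ℝ) - 1 := by
        have : (c i : ℝ) - (a i : ℝ) ≤ ((W:ℤ) - 1 : ℤ) := by exact_mod_cast h1
        push_cast at this; linarith
      have hs2 : -((W:ℝ) - 1) ≤ (c i : ℝ) - (a i : ℝ) := by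
        have : ((-((W:ℤ) - 1) : ℤ) : ℝ) ≤ (c i : ℝ) - (a i : ℝ) := by exact_mod_cast h2
        push_cast at this; linarith
      -- clear denominators
      have hrw : ∀ (A C z : ℝ), A + (C - A) * z / (W:ℝ) = (A*(W:ℝ) + (C-A)*z)/(W:ℝ) := by
        intro A C z; field_simp
      rw [hrw] at hxv hxv1 hyv hyv1
      rw [div_le_iff₀ Wpos] at hxv1 hyv1
      rw [le_div_iff₀ Wpos] at hxv hyv
      -- vertical gap at y is at least 2W
      have hgap : ((a i:ℝ)*(W:ℝ) + ((c i:ℝ)-(a i:ℝ))*y) + 2*(W:ℝ) ≤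
          (a k:ℝ)*(W:ℝ) + ((c k:ℝ)-(a k:ℝ))*y := by
        nlinarith [mul_nonneg (sub_nonneg.2 hyW) (by linarith : (0:ℝ) ≤ (a k:ℝ) - (a i:ℝ) - 2),
          mul_nonneg hy0 (by linarith : (0:ℝ) ≤ (c k:ℝ) - (c i:ℝ) - 2)]
      -- hence ((c i) - (a i)) * (y - x) ≤ -W
      have hDE : ((c i:ℝ)-(a i:ℝ)) * (y - x) ≤ -(W:ℝ) := by linarith [hgap, hyv1, hxv]
      -- but |c i - a i| ≤ W - 1 and |y - x| ≤ 1
      have hE1 : y - x ≤ 1 := by simp only at hxu hyu1; linarith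
      have hE2 : -1 ≤ y - x := by simp only at hyu hxu1; linarith
      nlinarith [mul_nonneg (by linarith : (0:ℝ) ≤ (W:ℝ) - 1 - ((c i:ℝ)-(a i:ℝ)))
          (by linarith : (0:ℝ) ≤ 1 - (y - x)),
        mul_nonneg (by linarith : (0:ℝ) ≤ (W:ℝ) - 1 + ((c i:ℝ)-(a i:ℝ)))
          (by linarith : (0:ℝ) ≤ 1 + (y - x))]
  by_contra h
  push_neg at h
  rw [Set.two_lt_ncard hfin] at h
  obtain ⟨i, hi, j, hj, k, hk, hij, hik, hjk⟩ := h
  rcases lt_trichotomy i j with h1 | h1 | h1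
  · rcases lt_trichotomy j k with h2 | h2 | h2
    · exact key i j k h1 h2 hi hk
    · exact hjk h2
    · rcases lt_trichotomy i k with h3 | h3 | h3
      · exact key i k j h3 h2 hi hj
      · exact hik h3
      · exact key k i j h3 h1 hk hj
  · exact hij h1
  · rcases lt_trichotomy i k with h2 | h2 | h2
    · exact key j i k h1 h2 hj hk
    · exact hik h2
    · rcases lt_trichotomy j k with h3 | h3 | h3
      · exact key j k i h3 h2 hj hi
      · exact hjk h3
      · exact key k j i h3 h1 hk hi
end

section
/- Let Δ > 0, let h ≥ 1 and ℓ be reals. Let f and g be affine functions on [0, Δ] satisfying g(0) − f(0) ≥ 0, g(Δ) − f(Δ) ≥ 0, and max(g(0) − f(0), g(Δ) − f(Δ)) > 2^{ℓ−h}. Let f̃ be an affine function on [0, Δ] with 0 ≤ f̃(0) − f(0) ≤ 2^{ℓ−2h} and 0 ≤ f̃(Δ) − f(Δ) ≤ 2^{ℓ−2h}. Then for every x in the center slab [Δ·2^{−h}, Δ·(1 − 2^{−h})], f(x) ≤ f̃(x) < g(x). -/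
/-!
Write `x = t Δ`; the center slab is exactly `2^{-h} ≤ min t (1 - t)`. Both gaps `f̃ - f` and
`g - f` are affine, so at `x` they are the convex combinations `(1-t)·(gap at 0) + t·(gap at Δ)`.
The rounding gap is at most `2^{ℓ-2h}`, while the nonnegative gap `g - f` keeps at least the
weight `min t (1 - t) ≥ 2^{-h}` of its larger endpoint value, which exceeds `2^{ℓ-h}`; and
`2^{-h} · 2^{ℓ-h} = 2^{ℓ-2h}`.
-/

lemma affine_sub {f g : ℝ → ℝ} (hf : ∃ p q : ℝ, ∀ x, f x = p * x + q)
    (hg : ∃ p q : ℝ, ∀ x, g x = p * x + q) : ∃ p q : ℝ, ∀ x, g x - f x = p * x + q := by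
  obtain ⟨a, b, hf⟩ := hf
  obtain ⟨c, d, hg⟩ := hg
  exact ⟨c - a, d - b, fun x => by rw [hf, hg]; ring⟩

lemma affine_apply_mul {f : ℝ → ℝ} (hf : ∃ p q : ℝ, ∀ x, f x = p * x + q) (t Δ : ℝ) :
    f (t * Δ) = (1 - t) * f 0 + t * f Δ := by
  obtain ⟨p, q, hf⟩ := hf
  simp only [hf]
  ring

section ConvexCombination

variable {a b t : ℝ}

lemma one_sub_mul_add_mul_nonneg (ha : 0 ≤ a) (hb : 0 ≤ b) (ht₀ : 0 ≤ t)
    (ht₁ : 0 ≤ 1 - t) :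
    0 ≤ (1 - t) * a + t * b :=
  add_nonneg (mul_nonneg ht₁ ha) (mul_nonneg ht₀ hb)

lemma one_sub_mul_add_mul_le {c : ℝ} (ha : a ≤ c) (hb : b ≤ c) (ht₀ : 0 ≤ t)
    (ht₁ : 0 ≤ 1 - t) :
    (1 - t) * a + t * b ≤ c := by
  nlinarith

lemma min_mul_max_le_one_sub_mul_add_mul (ha : 0 ≤ a) (hb : 0 ≤ b) (ht₀ : 0 ≤ t)
    (ht₁ : 0 ≤ 1 - t) :
    min t (1 - t) * max a b ≤ (1 - t) * a + t * b := by
  rcases le_total a b with hab | hab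
  · rw [max_eq_right hab]
    nlinarith [min_le_left t (1 - t)]
  · rw [max_eq_left hab]
    nlinarith [min_le_right t (1 - t)]

end ConvexCombination

lemma two_rpow_neg_mul_two_rpow_sub (ℓ h : ℝ) :
    (2:ℝ) ^ (-h) * (2:ℝ) ^ (ℓ - h) = (2:ℝ) ^ (ℓ - 2 * h) := by
  rw [← Real.rpow_add two_pos]
  ring_nf

theorem center_slab_interleaving_general
    (Δ h ℓ : ℝ) (hΔ : 0 < Δ)
    (f g ftilde : ℝ → ℝ)
    (hf : ∃ p q : ℝ, ∀ x, f x = p * x + q)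
    (hg : ∃ p q : ℝ, ∀ x, g x = p * x + q)
    (hft : ∃ p q : ℝ, ∀ x, ftilde x = p * x + q)
    (h0 : 0 ≤ g 0 - f 0) (h1 : 0 ≤ g Δ - f Δ)
    (hmax : max (g 0 - f 0) (g Δ - f Δ) > (2:ℝ) ^ (ℓ - h))
    (hr0 : 0 ≤ ftilde 0 - f 0) (hr0' : ftilde 0 - f 0 ≤ (2:ℝ) ^ (ℓ - 2 * h))
    (hr1 : 0 ≤ ftilde Δ - f Δ) (hr1' : ftilde Δ - f Δ ≤ (2:ℝ) ^ (ℓ - 2 * h)) :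
    ∀ x ∈ Set.Icc (Δ * (2:ℝ) ^ (-h)) (Δ * (1 - (2:ℝ) ^ (-h))),
      f x ≤ ftilde x ∧ ftilde x < g x := by
  rintro x ⟨hx₀, hx₁⟩
  obtain ⟨t, rfl⟩ : ∃ t, x = t * Δ := ⟨x / Δ, (div_mul_cancel₀ x hΔ.ne').symm⟩
  have hpos : 0 < (2:ℝ) ^ (-h) := Real.rpow_pos_of_pos two_pos _
  have ht₀ : (2:ℝ) ^ (-h) ≤ t := le_of_mul_le_mul_right (by linarith) hΔ
  have ht₁ : (2:ℝ) ^ (-h) ≤ 1 - t := le_of_mul_le_mul_right (by linarith) hΔ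
  have hround := affine_apply_mul (affine_sub hf hft) t Δ
  have hgap := affine_apply_mul (affine_sub hf hg) t Δ
  have hmin : (2:ℝ) ^ (-h) ≤ min t (1 - t) := le_min ht₀ ht₁
  have ht : 0 ≤ t ∧ 0 ≤ 1 - t := ⟨by linarith, by linarith⟩
  refine ⟨sub_nonneg.1 (hround ▸ one_sub_mul_add_mul_nonneg hr0 hr1 ht.1 ht.2), ?_⟩
  have hsep : ftilde (t * Δ) - f (t * Δ) < g (t * Δ) - f (t * Δ) := calc
    ftilde (t * Δ) - f (t * Δ) ≤ (2:ℝ) ^ (ℓ - 2 * h) :=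
      hround ▸ one_sub_mul_add_mul_le hr0' hr1' ht.1 ht.2
    _ = (2:ℝ) ^ (-h) * (2:ℝ) ^ (ℓ - h) := (two_rpow_neg_mul_two_rpow_sub ℓ h).symm
    _ < min t (1 - t) * max (g 0 - f 0) (g Δ - f Δ) :=
      mul_lt_mul' hmin hmax (by positivity) (hpos.trans_le hmin)
    _ ≤ g (t * Δ) - f (t * Δ) := hgap ▸ min_mul_max_le_one_sub_mul_add_mul h0 h1 ht.1 ht.2
  linarith

/-- Interleaving claim (2c) in the proof of Observation 4.1: rounding a segment `f`
upward by at most `2^{ℓ-2h}` at both endpoints keeps it (weakly above `f` and)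
strictly below any non-crossing segment `g` whose separation from `f` exceeds
`2^{ℓ-h}` at one of the slab boundaries, everywhere in the center slab. -/
theorem center_slab_interleaving
    (Δ h ℓ : ℝ) (hΔ : 0 < Δ) (hh : 1 ≤ h)
    (f g ftilde : ℝ → ℝ)
    (hf : ∃ p q : ℝ, ∀ x, f x = p * x + q)
    (hg : ∃ p q : ℝ, ∀ x, g x = p * x + q)
    (hft : ∃ p q : ℝ, ∀ x, ftilde x = p * x + q)
    (h0 : 0 ≤ g 0 - f 0) (h1 : 0 ≤ g Δ - f Δ)
    (hmax : max (g 0 - f 0) (g Δ - f Δ) > (2:ℝ) ^ (ℓ - h))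
    (hr0 : 0 ≤ ftilde 0 - f 0) (hr0' : ftilde 0 - f 0 ≤ (2:ℝ) ^ (ℓ - 2 * h))
    (hr1 : 0 ≤ ftilde Δ - f Δ) (hr1' : ftilde Δ - f Δ ≤ (2:ℝ) ^ (ℓ - 2 * h)) :
    ∀ x ∈ Set.Icc (Δ * (2:ℝ) ^ (-h)) (Δ * (1 - (2:ℝ) ^ (-h))),
      f x ≤ ftilde x ∧ ftilde x < g x :=
  center_slab_interleaving_general Δ h ℓ hΔ f g ftilde hf hg hft h0 h1 hmax hr0 hr0' hr1 hr1'
end
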